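/- Let A be an invertible r×r complex matrix, γ > 0, q ∈ ℂ with γq ≠ 1. Define N(q) = (1 − γq)I, θ(q) = (1−γq)^{-1}I, and M(q) = θ(q)(I − qA) + γ(I − θ(q))(A^{-1} − qI). Then the iteration matrix Z(q) := I − N(q)^{-1} M(q) satisfies Z(q) = [q/(1−γq)^2] · A^{-1}(A − γI)^2. -/

import Mathlib

/-!
With `c = 1 - γq` both `N = c I` and `θ = c⁻¹ I` are scalar, and `γ(1 - c⁻¹) = -γ²q / c`, so
`c² Z = c² I - (I - qA) + γ²q (A⁻¹ - qI)`. Since `c² - 1 - γ²q² = -2γq`, this is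
`q (A - 2γI + γ²A⁻¹) = q A⁻¹ (A - γI)²`.
-/

section BlendedIteration

variable {K R : Type*} [Field K] [Ring R] [Algebra K R]

theorem mul_sub_smul_one_sq_of_mul_eq_one {a b : R} (hba : b * a = 1) (g : K) :
    b * (a - g • 1) ^ 2 = a - (2 * g) • 1 + g ^ 2 • b := by
  have hsq : (a - g • (1 : R)) ^ 2 = a * a - (2 * g) • a + g ^ 2 • 1 := by
    simp only [sq, sub_mul, mul_sub, smul_mul_assoc, mul_smul_comm, one_mul, mul_one]
    module
  rw [hsq, mul_add, mul_sub, ← mul_assoc, hba, one_mul, mul_smul_comm, hba, mul_smul_comm, mul_one]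

theorem blendedM_eq_inv_smul {γ q : K} (hc : 1 - γ * q ≠ 0) (a b : R) :
    (1 - γ * q)⁻¹ • (1 : R) * (1 - q • a) + γ • ((1 - (1 - γ * q)⁻¹ • 1) * (b - q • 1))
      = (1 - γ * q)⁻¹ • ((1 - q • a) - (γ ^ 2 * q) • (b - q • 1)) := by
  have hθ : γ • (1 - (1 - γ * q)⁻¹ • (1 : R)) = -((1 - γ * q)⁻¹ * (γ ^ 2 * q)) • 1 := by
    rw [smul_sub, smul_smul, ← sub_smul]
    congr 1
    field_simp
    ring
  rw [← smul_mul_assoc, hθ]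
  simp only [smul_mul_assoc, one_mul]
  module

theorem one_sub_inv_smul_blendedM {γ q : K} (hc : 1 - γ * q ≠ 0) (a b : R) :
    1 - (1 - γ * q)⁻¹ • ((1 - γ * q)⁻¹ • ((1 - q • a) - (γ ^ 2 * q) • (b - q • 1)))
      = (q / (1 - γ * q) ^ 2) • (a - (2 * γ) • 1 + γ ^ 2 • b) := by
  simp only [smul_sub, smul_smul, sub_sub, smul_add]
  match_scalars <;> field_simp
  ring

end BlendedIteration

theorem Matrix.inv_smul_one {n K : Type*} [Fintype n] [DecidableEq n] [Field K] {c : K}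
    (hc : c ≠ 0) : (c • (1 : Matrix n n K))⁻¹ = c⁻¹ • 1 :=
  Matrix.inv_eq_left_inv (by rw [smul_mul_smul, inv_mul_cancel₀ hc, one_mul, one_smul])

theorem blended_iteration_matrix_general (r : ℕ)
    (A : Matrix (Fin r) (Fin r) ℂ) (hA : IsUnit A.det)
    (γ : ℝ) (q : ℂ) (hq : (γ : ℂ) * q ≠ 1)
    (N θ M Z : Matrix (Fin r) (Fin r) ℂ)
    (hN : N = (1 - (γ : ℂ) * q) • (1 : Matrix (Fin r) (Fin r) ℂ))
    (hθ : θ = (1 - (γ : ℂ) * q)⁻¹ • (1 : Matrix (Fin r) (Fin r) ℂ))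
    (hM : M = θ * (1 - q • A) + (γ : ℂ) • ((1 - θ) * (A⁻¹ - q • (1 : Matrix (Fin r) (Fin r) ℂ))))
    (hZ : Z = 1 - N⁻¹ * M) :
    Z = (q / (1 - (γ : ℂ) * q) ^ 2) • (A⁻¹ * (A - (γ : ℂ) • (1 : Matrix (Fin r) (Fin r) ℂ)) ^ 2) := by
  have hc : 1 - (γ : ℂ) * q ≠ 0 := sub_ne_zero.mpr hq.symm
  rw [hZ, hN, Matrix.inv_smul_one hc, smul_mul_assoc, one_mul, hM, hθ, blendedM_eq_inv_smul hc,
    one_sub_inv_smul_blendedM hc, mul_sub_smul_one_sq_of_mul_eq_one (Matrix.nonsing_inv_mul A hA)]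

theorem blended_iteration_matrix (r : ℕ) (hr : 0 < r)
    (A : Matrix (Fin r) (Fin r) ℂ) (hA : IsUnit A.det)
    (γ : ℝ) (hγ : 0 < γ) (q : ℂ) (hq : (γ : ℂ) * q ≠ 1)
    (N θ M Z : Matrix (Fin r) (Fin r) ℂ)
    (hN : N = (1 - (γ : ℂ) * q) • (1 : Matrix (Fin r) (Fin r) ℂ))
    (hθ : θ = (1 - (γ : ℂ) * q)⁻¹ • (1 : Matrix (Fin r) (Fin r) ℂ))
    (hM : M = θ * (1 - q • A) + (γ : ℂ) • ((1 - θ) * (A⁻¹ - q • (1 : Matrix (Fin r) (Fin r) ℂ))))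
    (hZ : Z = 1 - N⁻¹ * M) :
    Z = (q / (1 - (γ : ℂ) * q) ^ 2) • (A⁻¹ * (A - (γ : ℂ) • (1 : Matrix (Fin r) (Fin r) ℂ)) ^ 2) :=
  blended_iteration_matrix_general r A hA γ q hq N θ M Z hN hθ hM hZ
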